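/- Let g : [a,b] → ℝ be continuous. For each m take the equal partition with tags tₖ*, nonnegative weights wₖ(m) with ∑_{k=1}^m |wₖ(m) − (b−a)/m| → 0, and index sets J(m) ⊆ {1,…,m} with |J(m)|·max_k wₖ(m) → 0 as m → ∞. Then ∑_{k ∉ J(m)} g(tₖ*)·wₖ(m) → ∫_a^b g(t) dt. -/

import Mathlib

/-!
Write the incomplete weighted sum as
`∑ₖ g(tₖ*)·(b−a)/m + ∑ₖ g(tₖ*)·(wₖ − (b−a)/m) − ∑_{k∈J} g(tₖ*)·wₖ`.
The first term is an equal-mesh Riemann sum, which converges to `∫_a^b g` by uniform continuity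
of `g` on `[a,b]`. With `|g| ≤ M` on `[a,b]`, the second term is at most `M ∑ₖ |wₖ − (b−a)/m|`
and the third at most `M·|J|·maxₖ wₖ`, and both tend to `0`.
-/

open Filter Topology Set MeasureTheory

noncomputable def equalPartition (a b : ℝ) (m k : ℕ) : ℝ := a + k * (b - a) / m

section equalPartition

variable {a b : ℝ} {m k : ℕ}

@[simp]
lemma equalPartition_zero : equalPartition a b m 0 = a := by
  simp [equalPartition]

lemma equalPartition_self (hm : m ≠ 0) : equalPartition a b m m = b := by
  have : (m : ℝ) ≠ 0 := Nat.cast_ne_zero.2 hm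
  simp only [equalPartition]
  field_simp
  ring

lemma equalPartition_succ_sub (a b : ℝ) (m k : ℕ) :
    equalPartition a b m (k + 1) - equalPartition a b m k = (b - a) / m := by
  simp only [equalPartition]
  push_cast
  ring

lemma equalPartition_mono (hab : a ≤ b) : Monotone (equalPartition a b m) := by
  intro k l hkl
  simp only [equalPartition]
  gcongr

lemma equalPartition_mem_Icc (hab : a ≤ b) (hk : k ≤ m) : equalPartition a b m k ∈ Icc a b := by
  refine ⟨by simpa using equalPartition_mono (m := m) hab k.zero_le, ?_⟩
  rcases eq_or_ne m 0 with rfl | hm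
  · simpa [Nat.le_zero.1 hk] using hab
  · simpa [equalPartition_self hm] using equalPartition_mono (m := m) hab hk

lemma Icc_equalPartition_subset (hab : a ≤ b) (hk : k < m) :
    Icc (equalPartition a b m k) (equalPartition a b m (k + 1)) ⊆ Icc a b :=
  Icc_subset_Icc (equalPartition_mem_Icc hab hk.le).1 (equalPartition_mem_Icc hab hk).2

end equalPartition

lemma norm_smul_sub_intervalIntegral_le {E : Type*} [NormedAddCommGroup E] [NormedSpace ℝ E]
    [CompleteSpace E]
    {g : ℝ → E} {x y τ η : ℝ} (hτ : τ ∈ Icc x y) (hg : IntervalIntegrable g volume x y)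
    (hη : ∀ t ∈ Icc x y, ‖g τ - g t‖ ≤ η) :
    ‖(y - x) • g τ - ∫ t in x..y, g t‖ ≤ η * (y - x) := by
  have hxy : x ≤ y := hτ.1.trans hτ.2
  rw [← intervalIntegral.integral_const, ← intervalIntegral.integral_sub intervalIntegrable_const hg]
  simpa [abs_of_nonneg (sub_nonneg.2 hxy)] using
    intervalIntegral.norm_integral_le_of_norm_le_const fun t ht =>
      hη t (Ioc_subset_Icc_self (uIoc_of_le hxy ▸ ht))

section riemannSum

variable {E : Type*} [NormedAddCommGroup E] [NormedSpace ℝ E] [CompleteSpace E]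
  {a b : ℝ} {g : ℝ → E}

lemma norm_sum_smul_equalPartition_sub_integral_le (hab : a ≤ b) (hg : ContinuousOn g (Icc a b))
    {m : ℕ} (hm : m ≠ 0) {τ : ℕ → ℝ}
    (hτ : ∀ k < m, τ k ∈ Icc (equalPartition a b m k) (equalPartition a b m (k + 1))) {η : ℝ}
    (hη : ∀ s ∈ Icc a b, ∀ t ∈ Icc a b, dist s t ≤ (b - a) / m → dist (g s) (g t) ≤ η) :
    ‖∑ k ∈ Finset.range m, ((b - a) / m) • g (τ k) - ∫ t in a..b, g t‖ ≤ η * (b - a) := by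
  have hint : ∀ k < m, IntervalIntegrable g volume
      (equalPartition a b m k) (equalPartition a b m (k + 1)) := fun k hk =>
    (hg.mono (Icc_equalPartition_subset hab hk)).intervalIntegrable_of_Icc
      (equalPartition_mono hab k.le_succ)
  have hsplit := intervalIntegral.sum_integral_adjacent_intervals hint
  rw [equalPartition_zero, equalPartition_self hm] at hsplit
  rw [← hsplit, ← Finset.sum_sub_distrib]
  calc _ ≤ ∑ k ∈ Finset.range m, ‖((b - a) / m) • g (τ k) -
          ∫ t in equalPartition a b m k..equalPartition a b m (k + 1), g t‖ :=
        norm_sum_le _ _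
    _ ≤ ∑ k ∈ Finset.range m, η * ((b - a) / m) := Finset.sum_le_sum fun k hk => by
        have hk := Finset.mem_range.1 hk
        rw [← equalPartition_succ_sub]
        refine norm_smul_sub_intervalIntegral_le (hτ k hk) (hint k hk) fun t ht => ?_
        rw [← dist_eq_norm]
        exact hη _ (Icc_equalPartition_subset hab hk (hτ k hk)) _
          (Icc_equalPartition_subset hab hk ht)
          (equalPartition_succ_sub a b m k ▸ Real.dist_le_of_mem_Icc (hτ k hk) ht)
    _ = η * (b - a) := by
        rw [Finset.sum_const, Finset.card_range, nsmul_eq_mul]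
        field_simp

theorem tendsto_sum_smul_equalPartition (hab : a ≤ b) (hg : ContinuousOn g (Icc a b))
    {τ : ℕ → ℕ → ℝ}
    (hτ : ∀ m, ∀ k < m, τ m k ∈ Icc (equalPartition a b m k) (equalPartition a b m (k + 1))) :
    Tendsto (fun m : ℕ => ∑ k ∈ Finset.range m, ((b - a) / m) • g (τ m k))
      atTop (𝓝 (∫ t in a..b, g t)) := by
  rw [Metric.tendsto_nhds]
  intro ε hε
  set η := ε / (b - a + 1)
  have hηε : η * (b - a) < ε := by
    rw [div_mul_eq_mul_div, div_lt_iff₀ (by linarith)]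
    nlinarith
  obtain ⟨δ, hδ, hgδ⟩ := Metric.uniformContinuousOn_iff_le.1
    (isCompact_Icc.uniformContinuousOn_of_continuous hg) η (by positivity)
  have hmesh : ∀ᶠ m : ℕ in atTop, (b - a) / m ≤ δ :=
    (tendsto_const_div_atTop_nhds_zero_nat (b - a)).eventually (ge_mem_nhds hδ)
  filter_upwards [hmesh, eventually_ne_atTop 0] with m hmδ hm
  rw [dist_eq_norm]
  exact (norm_sum_smul_equalPartition_sub_integral_le hab hg hm (hτ m) fun s hs t ht hst =>
    hgδ s hs t ht (hst.trans hmδ)).trans_lt hηε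

end riemannSum

lemma Finset.le_ciSup₂ {ι α : Type*} [ConditionallyCompleteLattice α] (s : Finset ι)
    (f : ι → α) {i : ι} (hi : i ∈ s) :
    f i ≤ ⨆ j ∈ s, f j :=
  _root_.le_ciSup₂ (f := fun j (_ : j ∈ s) => f j)
    ((s.finite_toSet.image f).bddAbove.mono <| by
      rintro _ ⟨_, ⟨j, rfl⟩, hj, rfl⟩
      exact Set.mem_image_of_mem f hj) i hi

lemma abs_sum_mul_le {ι : Type*} {s : Finset ι} {f u : ι → ℝ} {M : ℝ}
    (hf : ∀ i ∈ s, |f i| ≤ M) : |∑ i ∈ s, f i * u i| ≤ M * ∑ i ∈ s, |u i| := by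
  rw [Finset.mul_sum]
  refine (Finset.abs_sum_le_sum_abs _ _).trans (Finset.sum_le_sum fun i hi => ?_)
  rw [abs_mul]
  exact mul_le_mul_of_nonneg_right (hf i hi) (abs_nonneg _)

/-- Common generalization of the deleting-items and disturbing-mesh theorems for
one-dimensional Riemann sums of a continuous function: with nonnegative weights
whose total deviation from (b−a)/m tends to 0 and deleted index sets J(m) with
|J(m)|·max_k wₖ(m) → 0, the incomplete weighted sums converge to ∫_a^b g. -/
theorem deleting_disturbing_continuous
    (a b : ℝ) (hab : a < b)
    (g : ℝ → ℝ) (hg : ContinuousOn g (Icc a b))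
    -- tags in the equal partition
    (ts : ℕ → ℕ → ℝ)
    (hts : ∀ (m k : ℕ), k < m →
      ts m k ∈ Icc (a + (k : ℝ) * (b - a) / (m : ℝ)) (a + ((k : ℝ) + 1) * (b - a) / (m : ℝ)))
    -- nonnegative weights
    (w : ℕ → ℕ → ℝ)
    (hw : ∀ (m k : ℕ), k < m → 0 ≤ w m k)
    (hwsum : Tendsto (fun m : ℕ => ∑ k ∈ Finset.range m, |w m k - (b - a) / (m : ℝ)|)
      atTop (𝓝 0))
    -- deleted index sets with |J(m)| · max_k wₖ(m) → 0
    (J : ℕ → Finset ℕ)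
    (hJsub : ∀ m : ℕ, J m ⊆ Finset.range m)
    (hJmax : Tendsto (fun m : ℕ => ((J m).card : ℝ) * ⨆ k ∈ Finset.range m, w m k)
      atTop (𝓝 0)) :
    Tendsto (fun m : ℕ => ∑ k ∈ Finset.range m \ J m, g (ts m k) * w m k)
      atTop (𝓝 (∫ t in a..b, g t)) := by
  have htag : ∀ m, ∀ k < m, ts m k ∈ Icc (equalPartition a b m k) (equalPartition a b m (k + 1)) :=
    fun m k hk => by simpa [equalPartition] using hts m k hk
  obtain ⟨M, hM⟩ := isCompact_Icc.exists_bound_of_continuousOn hg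
  have hM0 : 0 ≤ M := (norm_nonneg _).trans (hM a (left_mem_Icc.2 hab.le))
  have hgM : ∀ m, ∀ k ∈ Finset.range m, |g (ts m k)| ≤ M := fun m k hk =>
    have hk := Finset.mem_range.1 hk
    hM _ (Icc_equalPartition_subset hab.le hk (htag m k hk))
  have hwJ : ∀ m, ∑ k ∈ J m, |w m k| ≤ (J m).card * ⨆ k ∈ Finset.range m, w m k := fun m => by
    simpa using Finset.sum_le_card_nsmul _ _ _ fun k hk =>
      (abs_of_nonneg (hw m k (Finset.mem_range.1 (hJsub m hk)))).trans_le
        (Finset.le_ciSup₂ _ (w m) (hJsub m hk))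
  have hriemann : Tendsto (fun m : ℕ => ∑ k ∈ Finset.range m, g (ts m k) * ((b - a) / m))
      atTop (𝓝 (∫ t in a..b, g t)) := by
    simpa only [smul_eq_mul, mul_comm] using tendsto_sum_smul_equalPartition hab.le hg htag
  have hdisturb : Tendsto (fun m : ℕ => ∑ k ∈ Finset.range m, g (ts m k) * (w m k - (b - a) / m))
      atTop (𝓝 0) :=
    squeeze_zero_norm (fun m => abs_sum_mul_le (hgM m)) (by simpa using hwsum.const_mul M)
  have hdelete : Tendsto (fun m : ℕ => ∑ k ∈ J m, g (ts m k) * w m k) atTop (𝓝 0) :=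
    squeeze_zero_norm (fun m => (abs_sum_mul_le fun k hk => hgM m k (hJsub m hk)).trans
      (mul_le_mul_of_nonneg_left (hwJ m) hM0)) (by simpa using hJmax.const_mul M)
  rw [← add_zero (∫ t in a..b, g t), ← sub_zero (_ + 0)]
  refine ((hriemann.add hdisturb).sub hdelete).congr fun m => ?_
  rw [Finset.sum_sdiff_eq_sub (hJsub m), ← Finset.sum_add_distrib]
  simp only [← mul_add, add_sub_cancel]
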